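/- For every integer r ≥ 1 and every real x ≥ 0, lim_{n→∞} n^r·θ_{2r}^{(n)}(x) = X^r / (2^r·r!), where X = x(1+x). -/

import Mathlib

open Filter Topology Finset

/-- Baskakov basis functions `v_{k,n}(x) = C(n+k-1, k) x^k (1+x)^{-(n+k)}`. -/
noncomputable def baskakovBasis (n k : ℕ) (x : ℝ) : ℝ :=
  (Nat.choose (n + k - 1) k : ℝ) * x ^ k / (1 + x) ^ (n + k)

/-- Baskakov operator `(V_n f)(x) = Σ_{k≥0} f(k/n) v_{k,n}(x)`. -/
noncomputable def baskakov (n : ℕ) (f : ℝ → ℝ) (x : ℝ) : ℝ :=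
  ∑' k : ℕ, f ((k : ℝ) / n) * baskakovBasis n k x

/-- Polynomials θ_r^{(n)}: θ_0 = 1, θ_1 = 0 and
`n (r+1) θ_{r+1} = X (θ_r' + θ_{r-1})` for r ≥ 1, with X = x(1+x). -/
noncomputable def theta (n : ℕ) : ℕ → ℝ → ℝ
  | 0 => fun _ => 1
  | 1 => fun _ => 0
  | r + 2 => fun x =>
      x * (1 + x) * (deriv (theta n (r + 1)) x + theta n r x) / (n * (r + 2))

/-- Polynomials η_r^{(n)}: η_0 = 1, η_1 = 0 and
`(n+r)(r+1) η_{r+1} = -r(1+2x) η_r - X η_{r-1}` for r ≥ 1, with X = x(1+x). -/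
noncomputable def eta (n : ℕ) : ℕ → ℝ → ℝ
  | 0 => fun _ => 1
  | 1 => fun _ => 0
  | r + 2 => fun x =>
      (-((r + 1 : ℝ) * (1 + 2 * x) * eta n (r + 1) x) - x * (1 + x) * eta n r x) /
        (((n : ℝ) + (r + 1)) * (r + 2))

/-- Rising factorial `(n)_r = n (n+1) ⋯ (n+r-1)`. -/
def risingFactorial (n r : ℕ) : ℕ := ∏ i ∈ Finset.range r, (n + i)

/-!
Writing `h = 1/n`, one has `θ_k^{(n)}(x) = h^⌈k/2⌉ P_k(h, x)` for polynomials `P_k` in two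
variables that do not depend on `n`: the recurrence for `θ` becomes a recurrence for `P` with
no division by `n`. Hence `n^r θ_{2r}^{(n)}(x) = P_{2r}(1/n, x) → P_{2r}(0, x)`, and at `h = 0`
the even recurrence collapses to `P_{2m+2} = X P_{2m} / (2m+2)`, giving `X^r / (2^r r!)`.
-/

open Polynomial
open scoped Polynomial.Bivariate

namespace Baskakov

/-- The first variable `X` of `ℝ[X][Y]` plays the role of `h = 1/n`, the second `Y` that of `x`;
the factor `X ^ ((k + 1) % 2)` is the power of `h` lost when `⌈k/2⌉` does not increase. -/
noncomputable def thetaPoly : ℕ → ℝ[X][Y]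
  | 0 => 1
  | 1 => 0
  | k + 2 => CC (k + 2 : ℝ)⁻¹ *
      (Y * (1 + Y) * (C X ^ ((k + 1) % 2) * derivative (thetaPoly (k + 1)) + thetaPoly k))

lemma hasDerivAt_evalEval (p : ℝ[X][Y]) (h x : ℝ) :
    HasDerivAt (fun y => p.evalEval h y) ((derivative p).evalEval h x) x := by
  simp only [← map_evalRingHom_eval, ← derivative_map]
  exact Polynomial.hasDerivAt _ x

theorem theta_eq_evalEval_thetaPoly {n : ℕ} (hn : (n : ℝ) ≠ 0) :
    ∀ k, theta n k = fun x => ((n : ℝ)⁻¹) ^ ((k + 1) / 2) * (thetaPoly k).evalEval (n : ℝ)⁻¹ x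
  | 0 => by funext x; simp [theta, thetaPoly]
  | 1 => by funext x; simp [theta, thetaPoly]
  | k + 2 => by
    have hderiv : deriv (theta n (k + 1)) = fun x => ((n : ℝ)⁻¹) ^ ((k + 2) / 2) *
        (derivative (thetaPoly (k + 1))).evalEval (n : ℝ)⁻¹ x := by
      funext x
      rw [theta_eq_evalEval_thetaPoly hn (k + 1)]
      exact ((hasDerivAt_evalEval _ _ x).const_mul _).deriv
    have hpow : ∀ h : ℝ, h * h ^ ((k + 2) / 2) = h ^ ((k + 3) / 2) * h ^ ((k + 1) % 2) := by
      intro h; rw [← pow_succ', ← pow_add]; congr 1; omega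
    have hpow' : ∀ h : ℝ, h * h ^ ((k + 1) / 2) = h ^ ((k + 3) / 2) := by
      intro h; rw [← pow_succ']; congr 1; omega
    funext x
    rw [theta, hderiv, theta_eq_evalEval_thetaPoly hn k, thetaPoly]
    simp only [evalEval_mul, evalEval_add, evalEval_X, evalEval_one, evalEval_pow, evalEval_C,
      eval_X, eval_C, div_eq_mul_inv, mul_inv]
    linear_combination (x * (1 + x) / (k + 2) *
      (derivative (thetaPoly (k + 1))).evalEval (n : ℝ)⁻¹ x) * hpow (n : ℝ)⁻¹ +
      (x * (1 + x) / (k + 2) * (thetaPoly k).evalEval (n : ℝ)⁻¹ x) * hpow' (n : ℝ)⁻¹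

theorem evalEval_zero_thetaPoly_two_mul (m : ℕ) (x : ℝ) :
    (thetaPoly (2 * m)).evalEval 0 x = (x * (1 + x)) ^ m / (2 ^ m * (m.factorial : ℝ)) := by
  induction m with
  | zero => simp [thetaPoly]
  | succ m ih =>
    have hodd : (2 * m + 1) % 2 = 1 := by omega
    rw [show 2 * (m + 1) = 2 * m + 2 by ring, thetaPoly, hodd]
    simp only [evalEval_mul, evalEval_add, evalEval_X, evalEval_one, evalEval_C,
      eval_X, eval_C, pow_one, zero_mul, zero_add, ih, Nat.factorial_succ]
    push_cast
    field_simp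
    ring

end Baskakov

open Baskakov

theorem theta_even_asymptotics_general (r : ℕ) (x : ℝ) :
    Filter.Tendsto (fun n : ℕ => (n : ℝ) ^ r * theta n (2 * r) x) Filter.atTop
      (nhds ((x * (1 + x)) ^ r / (2 ^ r * (Nat.factorial r : ℝ)))) := by
  rw [← evalEval_zero_thetaPoly_two_mul]
  have hcont : Tendsto (fun n : ℕ => (thetaPoly (2 * r)).evalEval (n : ℝ)⁻¹ x) atTop
      (𝓝 ((thetaPoly (2 * r)).evalEval 0 x)) :=
    ((Polynomial.continuous _).tendsto 0).comp tendsto_inv_atTop_nhds_zero_nat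
  refine hcont.congr' ?_
  filter_upwards [eventually_ne_atTop 0] with n hn
  have hn : (n : ℝ) ≠ 0 := Nat.cast_ne_zero.mpr hn
  rw [theta_eq_evalEval_thetaPoly hn, show (2 * r + 1) / 2 = r by omega, ← mul_assoc, ← mul_pow,
    mul_inv_cancel₀ hn, one_pow, one_mul]

/-- `lim_{n→∞} n^r θ_{2r}^{(n)}(x) = X^r / (2^r r!)`. -/
theorem theta_even_asymptotics (r : ℕ) (hr : 1 ≤ r) (x : ℝ) (hx : 0 ≤ x) :
    Filter.Tendsto (fun n : ℕ => (n : ℝ) ^ r * theta n (2 * r) x) Filter.atTop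
      (nhds ((x * (1 + x)) ^ r / (2 ^ r * (Nat.factorial r : ℝ)))) :=
  theta_even_asymptotics_general r x
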